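/- Define X : ℝ² → ℝ³ by X(u,v) = ( cosh u·sin v , sinh u·cos v + (1/2)·sin v·cos v·(sinh²u + cosh²u) − v/2 , cosh u·cos v·(1 + sinh u·sin v) ). Then: (i) each coordinate function of X is harmonic on ℝ² (∂²X_k/∂u² + ∂²X_k/∂v² = 0); (ii) X is Lorentz-conformal, i.e. ⟨X_u,X_u⟩_L = ⟨X_v,X_v⟩_L and ⟨X_u,X_v⟩_L = 0 everywhere; and (iii) X(u,0) = (0, sinh u, cosh u) for all u ∈ ℝ. -/

import Mathlib

/-! `X` is the real part of the holomorphic curve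
`F(z) = (-i sinh z, sinh z - (i/4)(sinh 2z - 2z), cosh z - (i/4) cosh 2z)`, `z = u + iv`.
Real parts of holomorphic functions are harmonic, and `X_u - i X_v = F'(z)` with
`F'(z) = (-i cosh z, cosh z - i sinh² z, sinh z (1 - i cosh z))`. This vector is isotropic for the
complex-bilinear extension of the Lorentz form, `⟨F', F'⟩ = sinh² z (cosh² z - sinh² z - 1) = 0`,
and the real and imaginary parts of that identity are the two conformality relations. -/

open Real

/-- Lorentzian inner product on ℝ³: ⟨p,q⟩ = p₁q₁ + p₂q₂ − p₃q₃. -/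
noncomputable def lorentz (p q : ℝ × ℝ × ℝ) : ℝ :=
  p.1 * q.1 + p.2.1 * q.2.1 - p.2.2 * q.2.2

/-- First coordinate of the bending helicoid with spacelike axis, case a = 1. -/
noncomputable def X1 (u v : ℝ) : ℝ :=
  cosh u * sin v

/-- Second coordinate of the bending helicoid with spacelike axis, case a = 1. -/
noncomputable def X2 (u v : ℝ) : ℝ :=
  sinh u * cos v + (1/2) * sin v * cos v * (sinh u ^ 2 + cosh u ^ 2) - v / 2

/-- Third coordinate of the bending helicoid with spacelike axis, case a = 1. -/
noncomputable def X3 (u v : ℝ) : ℝ :=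
  cosh u * cos v * (1 + sinh u * sin v)

/-- Partial derivative of X with respect to u. -/
noncomputable def Xu (u v : ℝ) : ℝ × ℝ × ℝ :=
  (deriv (fun s => X1 s v) u, deriv (fun s => X2 s v) u, deriv (fun s => X3 s v) u)

/-- Partial derivative of X with respect to v. -/
noncomputable def Xv (u v : ℝ) : ℝ × ℝ × ℝ :=
  (deriv (fun t => X1 u t) v, deriv (fun t => X2 u t) v, deriv (fun t => X3 u t) v)

section

open Complex

namespace Complex

theorem sinh_re (z : ℂ) : (sinh z).re = Real.sinh z.re * Real.cos z.im := by
  conv_lhs => rw [← re_add_im z, sinh_add, sinh_mul_I, cosh_mul_I]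
  simp [← ofReal_sinh, ← ofReal_cosh, ← ofReal_sin, ← ofReal_cos]

theorem sinh_im (z : ℂ) : (sinh z).im = Real.cosh z.re * Real.sin z.im := by
  conv_lhs => rw [← re_add_im z, sinh_add, sinh_mul_I, cosh_mul_I]
  simp [← ofReal_sinh, ← ofReal_cosh, ← ofReal_sin, ← ofReal_cos]

theorem cosh_re (z : ℂ) : (cosh z).re = Real.cosh z.re * Real.cos z.im := by
  conv_lhs => rw [← re_add_im z, cosh_add, sinh_mul_I, cosh_mul_I]
  simp [← ofReal_sinh, ← ofReal_cosh, ← ofReal_sin, ← ofReal_cos]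

theorem cosh_im (z : ℂ) : (cosh z).im = Real.sinh z.re * Real.sin z.im := by
  conv_lhs => rw [← re_add_im z, cosh_add, sinh_mul_I, cosh_mul_I]
  simp [← ofReal_sinh, ← ofReal_cosh, ← ofReal_sin, ← ofReal_cos]

theorem ofReal_re_sub_mul_I_re_mul_I (w : ℂ) : (w.re : ℂ) - (w * I).re * I = w := by
  simp

end Complex

section RealPart

variable {f : ℝ → ℝ → ℝ} {F : ℂ → ℂ} {w : ℂ} {u v : ℝ}

theorem HasDerivAt.re_comp_add_mul_I_left (h : HasDerivAt F w (u + v * I)) :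
    HasDerivAt (fun s : ℝ => (F (s + v * I)).re) w.re u :=
  (h.comp_add_const (u : ℂ) (v * I)).real_of_complex

theorem HasDerivAt.re_comp_add_mul_I_right (h : HasDerivAt F w (u + v * I)) :
    HasDerivAt (fun t : ℝ => (F (u + t * I)).re) (w * I).re v :=
  (h.comp (v : ℂ) ((hasDerivAt_mul_const I).const_add (u : ℂ))).real_of_complex

theorem hasDerivAt_left_of_eq_re (hf : ∀ u v, f u v = (F (u + v * I)).re)
    (h : HasDerivAt F w (u + v * I)) : HasDerivAt (f · v) w.re u := by
  simpa only [hf] using h.re_comp_add_mul_I_left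

theorem hasDerivAt_right_of_eq_re (hf : ∀ u v, f u v = (F (u + v * I)).re)
    (h : HasDerivAt F w (u + v * I)) : HasDerivAt (f u ·) (w * I).re v := by
  simpa only [hf] using h.re_comp_add_mul_I_right

theorem laplacian_eq_zero_of_eq_re (hF : Differentiable ℂ F)
    (hf : ∀ u v, f u v = (F (u + v * I)).re) (u v : ℝ) :
    deriv (deriv (f · v)) u + deriv (deriv (f u ·)) v = 0 := by
  have hfu : deriv (f · v) = fun s : ℝ => (deriv F (s + v * I)).re :=
    funext fun s => (hasDerivAt_left_of_eq_re hf (hF _).hasDerivAt).deriv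
  have hfv : deriv (f u ·) = fun t : ℝ => (deriv F (u + t * I) * I).re :=
    funext fun t => (hasDerivAt_right_of_eq_re hf (hF _).hasDerivAt).deriv
  rw [hfu, hfv, (hF.deriv _).hasDerivAt.re_comp_add_mul_I_left.deriv,
    ((hF.deriv _).hasDerivAt.mul_const I).re_comp_add_mul_I_right.deriv]
  simp [mul_assoc]

end RealPart

theorem lorentz_eq_and_eq_zero_of_isotropic {a b : ℝ × ℝ × ℝ}
    (h : ((a.1 : ℂ) - b.1 * I) ^ 2 + ((a.2.1 : ℂ) - b.2.1 * I) ^ 2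
      - ((a.2.2 : ℂ) - b.2.2 * I) ^ 2 = 0) :
    lorentz a a = lorentz b b ∧ lorentz a b = 0 := by
  have hre := congrArg re h
  have him := congrArg im h
  simp only [sq, sub_re, add_re, mul_re, ofReal_re, I_re, mul_zero, ofReal_im, I_im, mul_one,
    sub_self, sub_zero, sub_im, mul_im, add_zero, zero_sub, mul_neg, neg_mul, neg_neg, zero_re,
    add_im, zero_im] at hre him
  constructor <;> unfold lorentz <;> linarith

noncomputable def F₁ (z : ℂ) : ℂ := -I * sinh z

noncomputable def F₂ (z : ℂ) : ℂ := sinh z - I / 4 * (sinh (2 * z) - 2 * z)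

noncomputable def F₃ (z : ℂ) : ℂ := cosh z - I / 4 * cosh (2 * z)

theorem X1_eq_re (u v : ℝ) : X1 u v = (F₁ (u + v * I)).re := by
  simp [X1, F₁, sinh_im]

theorem X2_eq_re (u v : ℝ) : X2 u v = (F₂ (u + v * I)).re := by
  simp [X2, F₂, sinh_re, sinh_im, Real.cosh_two_mul, Real.sin_two_mul]
  ring

theorem X3_eq_re (u v : ℝ) : X3 u v = (F₃ (u + v * I)).re := by
  simp [X3, F₃, cosh_re, cosh_im, Real.sinh_two_mul, Real.sin_two_mul]
  ring

theorem hasDerivAt_F₁ (z : ℂ) : HasDerivAt F₁ (-I * cosh z) z :=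
  (Complex.hasDerivAt_sinh z).const_mul (-I)

theorem hasDerivAt_F₂ (z : ℂ) : HasDerivAt F₂ (cosh z - I * sinh z ^ 2) z := by
  have h := (Complex.hasDerivAt_sinh z).sub ((((hasDerivAt_id' z).const_mul 2).csinh.sub
    ((hasDerivAt_id' z).const_mul 2)).const_mul (I / 4))
  refine h.congr_deriv ?_
  rw [Complex.cosh_two_mul]
  linear_combination (-I / 2) * Complex.cosh_sq_sub_sinh_sq z

theorem hasDerivAt_F₃ (z : ℂ) : HasDerivAt F₃ (sinh z * (1 - I * cosh z)) z := by
  have h := (Complex.hasDerivAt_cosh z).sub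
    (((hasDerivAt_id' z).const_mul 2).ccosh.const_mul (I / 4))
  refine h.congr_deriv ?_
  rw [Complex.sinh_two_mul]
  ring

theorem F_deriv_isotropic (z : ℂ) :
    (-I * cosh z) ^ 2 + (cosh z - I * sinh z ^ 2) ^ 2 - (sinh z * (1 - I * cosh z)) ^ 2 = 0 := by
  linear_combination (cosh z ^ 2 + sinh z ^ 4 - sinh z ^ 2 * cosh z ^ 2) * I_sq
    + sinh z ^ 2 * Complex.cosh_sq_sub_sinh_sq z

theorem lorentz_Xu_Xv_conformal (u v : ℝ) :
    lorentz (Xu u v) (Xu u v) = lorentz (Xv u v) (Xv u v) ∧ lorentz (Xu u v) (Xv u v) = 0 := by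
  set z : ℂ := u + v * I
  apply lorentz_eq_and_eq_zero_of_isotropic
  simp only [Xu, Xv, (hasDerivAt_left_of_eq_re X1_eq_re (hasDerivAt_F₁ z)).deriv,
    (hasDerivAt_left_of_eq_re X2_eq_re (hasDerivAt_F₂ z)).deriv,
    (hasDerivAt_left_of_eq_re X3_eq_re (hasDerivAt_F₃ z)).deriv,
    (hasDerivAt_right_of_eq_re X1_eq_re (hasDerivAt_F₁ z)).deriv,
    (hasDerivAt_right_of_eq_re X2_eq_re (hasDerivAt_F₂ z)).deriv,
    (hasDerivAt_right_of_eq_re X3_eq_re (hasDerivAt_F₃ z)).deriv, ofReal_re_sub_mul_I_re_mul_I]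
  exact F_deriv_isotropic z

end

/-- The bending helicoid with spacelike axis for a = 1 is harmonic, Lorentz-conformal,
and contains the circle (0, sinh u, cosh u). -/
theorem bending_helicoid_spacelike_a_eq_one :
    (∀ u v : ℝ,
      deriv (deriv (fun s => X1 s v)) u + deriv (deriv (fun t => X1 u t)) v = 0 ∧
      deriv (deriv (fun s => X2 s v)) u + deriv (deriv (fun t => X2 u t)) v = 0 ∧
      deriv (deriv (fun s => X3 s v)) u + deriv (deriv (fun t => X3 u t)) v = 0) ∧
    (∀ u v : ℝ,
      lorentz (Xu u v) (Xu u v) = lorentz (Xv u v) (Xv u v) ∧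
      lorentz (Xu u v) (Xv u v) = 0) ∧
    (∀ u : ℝ, (X1 u 0, X2 u 0, X3 u 0) = (0, sinh u, cosh u)) := by
  refine ⟨fun u v => ⟨?_, ?_, ?_⟩, lorentz_Xu_Xv_conformal, fun u => by simp [X1, X2, X3]⟩
  · exact laplacian_eq_zero_of_eq_re (fun z => (hasDerivAt_F₁ z).differentiableAt) X1_eq_re u v
  · exact laplacian_eq_zero_of_eq_re (fun z => (hasDerivAt_F₂ z).differentiableAt) X2_eq_re u v
  · exact laplacian_eq_zero_of_eq_re (fun z => (hasDerivAt_F₃ z).differentiableAt) X3_eq_re u v
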